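/- Let b ≥ 1 and let (SS_r)_{r≥0} be nonnegative integers, each less than 2^{2b}, with SS_0 ≥ 2^{b-1}. Define Y = Σ_{r≥0} SS_r · 2^{−r+1−b}, H_r = ⌊SS_r/2^b⌋, and E = Σ_{r=0}^{b} ⌊H_r · 2^{−r+1}⌋. Then E ≤ Y < E + b + 7 and Y ≥ 1. -/

import Mathlib

/-! Write `SS_r = 2^b H_r + L_r` with `L_r < 2^b`. For `r ≤ b`, the term `SS_r 2^{1-r-b}` exceeds
`⌊H_r 2^{1-r}⌋` by less than `1 + 2^{1-r}`, and these excesses sum to less than `b + 1 + 4`. Since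
`SS_r < 2^{2b}`, the terms with `r > b` are dominated by a geometric series summing to `2`. -/

open Finset

lemma two_zpow_sub_natCast (z : ℤ) (r : ℕ) : (2 : ℝ) ^ (z - r) = 2 ^ z * 2⁻¹ ^ r := by
  rw [zpow_sub₀ two_ne_zero, zpow_natCast, div_eq_mul_inv, inv_pow]

lemma natCast_div_mul_le (n d : ℕ) {x : ℝ} (hx : 0 ≤ x) :
    ((n / d : ℕ) : ℝ) * x ≤ n * (x / d) := by
  rw [← mul_div_assoc, ← div_mul_eq_mul_div]
  exact mul_le_mul_of_nonneg_right Nat.cast_div_le hx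

lemma natCast_mul_div_lt (n : ℕ) {d : ℕ} (hd : 0 < d) {x : ℝ} (hx : 0 < x) :
    (n : ℝ) * (x / d) < ((n / d : ℕ) : ℝ) * x + x := by
  have hn : (n : ℝ) < (n / d : ℕ) * d + d := by exact_mod_cast Nat.lt_div_mul_add hd
  have hd' : (0 : ℝ) < d := by exact_mod_cast hd
  rw [← mul_div_assoc, div_lt_iff₀ hd']
  nlinarith

lemma two_zpow_sub_natCast_eq_div (z : ℤ) (b : ℕ) :
    (2 : ℝ) ^ (z - b) = 2 ^ z / ((2 ^ b : ℕ) : ℝ) := by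
  rw [zpow_sub₀ two_ne_zero, zpow_natCast, Nat.cast_pow, Nat.cast_ofNat]

lemma floor_natCast_div_two_pow_mul_le (n b : ℕ) (z : ℤ) :
    (⌊((n / 2 ^ b : ℕ) : ℝ) * 2 ^ z⌋ : ℝ) ≤ n * 2 ^ (z - b) := by
  rw [two_zpow_sub_natCast_eq_div]
  exact (Int.floor_le _).trans (natCast_div_mul_le _ _ (by positivity))

lemma natCast_mul_two_zpow_lt_floor (n b : ℕ) (z : ℤ) :
    (n : ℝ) * 2 ^ (z - b) < ⌊((n / 2 ^ b : ℕ) : ℝ) * 2 ^ z⌋ + 1 + 2 ^ z := by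
  rw [two_zpow_sub_natCast_eq_div]
  have := natCast_mul_div_lt n (d := 2 ^ b) (by positivity) (x := (2 : ℝ) ^ z) (by positivity)
  linarith [Int.lt_floor_add_one (((n / 2 ^ b : ℕ) : ℝ) * 2 ^ z)]

lemma natCast_mul_two_zpow_le {n m : ℕ} (hn : n < 2 ^ m) (z : ℤ) :
    (n : ℝ) * 2 ^ z ≤ 2 ^ (z + m) := by
  rw [zpow_add₀ two_ne_zero, mul_comm, zpow_natCast]
  gcongr
  exact_mod_cast hn.le

lemma one_le_natCast_mul_two_zpow {n b : ℕ} (hn : 2 ^ (b - 1) ≤ n) :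
    1 ≤ (n : ℝ) * 2 ^ (1 - b : ℤ) := by
  calc (1 : ℝ) = 2 ^ ((b : ℤ) - 1) * 2 ^ (1 - b : ℤ) := by
        rw [← zpow_add₀ two_ne_zero]; simp
    _ ≤ 2 ^ (b - 1) * 2 ^ (1 - b : ℤ) := by
        rw [← zpow_natCast]
        gcongr
        · norm_num
        · omega
    _ ≤ n * 2 ^ (1 - b : ℤ) := by gcongr; exact_mod_cast hn

lemma summable_of_le_geometric {g : ℕ → ℝ} {C ρ : ℝ} (hg : ∀ r, 0 ≤ g r)
    (hρ₀ : 0 ≤ ρ) (hρ₁ : ρ < 1) (hle : ∀ r, g r ≤ C * ρ ^ r) : Summable g :=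
  .of_nonneg_of_le hg hle ((summable_geometric_of_lt_one hρ₀ hρ₁).mul_left C)

lemma tsum_nat_add_le_of_le_geometric {g : ℕ → ℝ} {C ρ : ℝ} (hg : ∀ r, 0 ≤ g r)
    (hρ₀ : 0 ≤ ρ) (hρ₁ : ρ < 1) (hle : ∀ r, g r ≤ C * ρ ^ r) (n : ℕ) :
    ∑' k, g (k + n) ≤ C * ρ ^ n * (1 - ρ)⁻¹ := by
  have hgeo := summable_geometric_of_lt_one hρ₀ hρ₁
  calc ∑' k, g (k + n) ≤ ∑' k, C * ρ ^ n * ρ ^ k :=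
        ((summable_of_le_geometric hg hρ₀ hρ₁ hle).comp_injective (add_left_injective n)).tsum_le_tsum
          (fun k => (hle _).trans_eq (by ring)) (hgeo.mul_left _)
    _ = C * ρ ^ n * (1 - ρ)⁻¹ := by rw [tsum_mul_left, tsum_geometric_of_lt_one hρ₀ hρ₁]

lemma sum_range_two_zpow_one_sub_le (n : ℕ) : ∑ r ∈ range n, (2 : ℝ) ^ (1 - r : ℤ) ≤ 4 := by
  simp_rw [two_zpow_sub_natCast, ← mul_sum, ← one_div]
  linarith [sum_geometric_two_le n]

theorem stmt11_general (b : ℕ) (SS : ℕ → ℕ)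
    (hSS : ∀ r, SS r < 2 ^ (2 * b)) (h0 : 2 ^ (b - 1) ≤ SS 0)
    (Y : ℝ) (hY : Y = ∑' r : ℕ, (SS r : ℝ) * (2 : ℝ) ^ (1 - (r : ℤ) - (b : ℤ)))
    (E : ℤ)
    (hE : E = ∑ r ∈ Finset.range (b + 1),
        ⌊((SS r / 2 ^ b : ℕ) : ℝ) * (2 : ℝ) ^ (1 - (r : ℤ))⌋) :
    (E : ℝ) ≤ Y ∧ Y < (E : ℝ) + b + 7 ∧ 1 ≤ Y := by
  set f : ℕ → ℝ := fun r => (SS r : ℝ) * (2 : ℝ) ^ (1 - (r : ℤ) - (b : ℤ)) with hf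
  have hf_nonneg : ∀ r, 0 ≤ f r := fun r => by positivity
  have hf_le : ∀ r, f r ≤ 2 ^ (b + 1) * 2⁻¹ ^ r := fun r => by
    refine (natCast_mul_two_zpow_le (hSS r) _).trans_eq ?_
    rw [← zpow_natCast, ← two_zpow_sub_natCast]
    push_cast; ring_nf
  have hsum : Summable f := summable_of_le_geometric hf_nonneg (by norm_num) (by norm_num) hf_le
  have hY_split : Y = ∑ r ∈ range (b + 1), f r + ∑' k, f (k + (b + 1)) := by
    rw [hY, hsum.sum_add_tsum_nat_add]
  have htail : ∑' k, f (k + (b + 1)) ≤ 2 := by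
    refine (tsum_nat_add_le_of_le_geometric hf_nonneg (by norm_num) (by norm_num) hf_le _).trans_eq ?_
    rw [← mul_pow]; norm_num
  have hE_cast : (E : ℝ) = ∑ r ∈ range (b + 1), (⌊((SS r / 2 ^ b : ℕ) : ℝ) * 2 ^ (1 - (r : ℤ))⌋ : ℝ) := by
    rw [hE]; push_cast; rfl
  refine ⟨?_, ?_, ?_⟩
  · have := sum_le_sum fun r (_ : r ∈ range (b + 1)) => floor_natCast_div_two_pow_mul_le (SS r) b (1 - r)
    have htail_nonneg : 0 ≤ ∑' k, f (k + (b + 1)) := tsum_nonneg fun k => hf_nonneg _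
    linarith
  · have hhead := sum_lt_sum_of_nonempty nonempty_range_add_one
      fun r (_ : r ∈ range (b + 1)) => natCast_mul_two_zpow_lt_floor (SS r) b (1 - r)
    simp only [sum_add_distrib, sum_const, card_range, nsmul_eq_mul, mul_one, ← hE_cast] at hhead
    push_cast at hhead
    linarith [sum_range_two_zpow_one_sub_le (b + 1)]
  · have h1 : 1 ≤ f 0 := by simpa [hf] using one_le_natCast_mul_two_zpow h0
    linarith [hsum.le_tsum 0 fun r _ => hf_nonneg r]

/-- quality of the coarse estimator.  With nonnegative integers
`SS_r < 2^{2b}`, `SS_0 ≥ 2^{b-1}`, `Y = Σ_{r≥0} SS_r·2^{-r+1-b}`,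
`H_r = ⌊SS_r/2^b⌋` and `E = Σ_{r=0}^{b} ⌊H_r·2^{-r+1}⌋`, one has
`E ≤ Y < E + b + 7` and `Y ≥ 1`. -/
theorem stmt11 (b : ℕ) (hb : 1 ≤ b) (SS : ℕ → ℕ)
    (hSS : ∀ r, SS r < 2 ^ (2 * b)) (h0 : 2 ^ (b - 1) ≤ SS 0)
    (Y : ℝ) (hY : Y = ∑' r : ℕ, (SS r : ℝ) * (2 : ℝ) ^ (1 - (r : ℤ) - (b : ℤ)))
    (E : ℤ)
    (hE : E = ∑ r ∈ Finset.range (b + 1),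
        ⌊((SS r / 2 ^ b : ℕ) : ℝ) * (2 : ℝ) ^ (1 - (r : ℤ))⌋) :
    (E : ℝ) ≤ Y ∧ Y < (E : ℝ) + b + 7 ∧ 1 ≤ Y :=
  stmt11_general b SS hSS h0 Y hY E hE
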